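/- Fix d ≥ 1, n ∈ ℕ, η ∈ (0, e^{−5}], and x_0 ∈ ℝ^d with |x_0| ≤ η^{−1/2}. Let (N_m)_{1≤m≤n} be vectors in ℝ^d with |N_m| < |log η|² for all 1 ≤ m ≤ n, and define Y_0 = x_0, Y_{m+1} = Y_m − η Y_m log(1+|Y_m|) + √η N_{m+1}. Then sup_{0 ≤ m ≤ n} |Y_m| ≤ η^{−1/2} |log η|². -/

import Mathlib

/-!
With `s = √η` and `L = |log η| ≥ 2`, the ball of radius `R = L² / s` is invariant under one step
of the scheme. On that ball the drift coefficient `c = η log (1 + |y|)` lies in `[0, 1]`, since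
`η log (1 + R) ≤ 3ηL ≤ 6s`, so a step sends `|y|` to at most `(1 - c) |y| + s L²`. If `|y| ≤ 1 / s`
this is at most `1 / s + s L² ≤ R`; otherwise `c ≥ η log (1 / s) = ηL / 2`, and the contraction
`ηL R / 2 = s L³ / 2` outweighs the noise `s L²`.
-/

open Real

namespace Real

theorem log_inv_sqrt {x : ℝ} (hx : 0 ≤ x) : log (√x)⁻¹ = -log x / 2 := by
  rw [log_inv, log_sqrt hx]; ring

theorem neg_log_le_two_mul_inv_sqrt {x : ℝ} (hx : 0 < x) : -log x ≤ 2 * (√x)⁻¹ := by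
  have := log_le_sub_one_of_pos (inv_pos.2 (sqrt_pos.2 hx))
  rw [log_inv_sqrt hx.le] at this
  linarith

theorem two_le_neg_log {x : ℝ} (hx : 0 < x) (hx36 : x ≤ 1 / 36) : 2 ≤ -log x := by
  have he : exp 2 ≤ 36 := by
    rw [show (2 : ℝ) = 1 + 1 by norm_num, exp_add]
    nlinarith [exp_one_lt_three, exp_pos 1]
  rw [← log_inv, le_log_iff_exp_le (by positivity)]
  calc exp 2 ≤ 36 := he
    _ ≤ x⁻¹ := by rw [le_inv_comm₀ (by norm_num) hx]; simpa using hx36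

theorem mul_neg_log_le_two_mul_sqrt {x : ℝ} (hx : 0 < x) : x * -log x ≤ 2 * √x := by
  calc x * -log x ≤ x * (2 * (√x)⁻¹) := by gcongr; exact neg_log_le_two_mul_inv_sqrt hx
    _ = 2 * √x := by rw [mul_left_comm, ← div_eq_mul_inv, div_sqrt]

theorem exp_neg_five_le : exp (-5) ≤ 1 / 36 := by
  have h := quadratic_le_exp_of_nonneg (show (0 : ℝ) ≤ 5 / 2 by norm_num)
  rw [exp_neg, one_div, show (5 : ℝ) = 5 / 2 + 5 / 2 by norm_num, exp_add]
  exact inv_anti₀ (by norm_num) (by nlinarith)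

end Real

theorem mul_log_one_add_le_one {η : ℝ} (hη : 0 < η) (hη36 : η ≤ 1 / 36) :
    η * log (1 + (√η)⁻¹ * log η ^ 2) ≤ 1 := by
  set L := -log η
  have hL2 : 2 ≤ L := two_le_neg_log hη hη36
  have hs6 : √η ≤ 1 / 6 := sqrt_le_iff.2 ⟨by norm_num, by linarith⟩
  have hs : 0 < √η := sqrt_pos.2 hη
  have h6 : 6 ≤ (√η)⁻¹ := by rw [le_inv_comm₀ (by norm_num) hs]; linarith
  rw [← neg_sq]
  have hlog : log (1 + (√η)⁻¹ * L ^ 2) ≤ 3 * L :=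
    calc log (1 + (√η)⁻¹ * L ^ 2) ≤ log (2 * ((√η)⁻¹ * L ^ 2)) :=
          log_le_log (by positivity) (by nlinarith)
      _ = log 2 + L / 2 + 2 * log L := by
          rw [log_mul (by norm_num) (by positivity), log_mul (by positivity) (by positivity),
            log_pow, log_inv_sqrt hη.le]
          push_cast; ring
      _ ≤ 1 + L / 2 + 2 * (L - 1) := by
          gcongr
          · linarith [log_le_sub_one_of_pos (show (0 : ℝ) < 2 by norm_num)]
          · exact log_le_sub_one_of_pos (by linarith)
      _ ≤ 3 * L := by linarith
  calc η * log (1 + (√η)⁻¹ * L ^ 2) ≤ η * (3 * L) := by gcongr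
    _ = 3 * (η * L) := by ring
    _ ≤ 3 * (2 * √η) := by gcongr 3 * ?_; exact mul_neg_log_le_two_mul_sqrt hη
    _ ≤ 1 := by linarith

section

variable {E : Type*} [SeminormedAddCommGroup E] [NormedSpace ℝ E]

theorem norm_sub_smul_add_le {c : ℝ} (hc : c ≤ 1) (y v : E) :
    ‖y - c • y + v‖ ≤ (1 - c) * ‖y‖ + ‖v‖ :=
  calc ‖y - c • y + v‖ = ‖(1 - c) • y + v‖ := by rw [sub_smul, one_smul]
    _ ≤ ‖(1 - c) • y‖ + ‖v‖ := norm_add_le _ _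
    _ = (1 - c) * ‖y‖ + ‖v‖ := by rw [norm_smul, Real.norm_of_nonneg (by linarith)]

noncomputable def emStep (η : ℝ) (y ξ : E) : E :=
  y - (η * log (1 + ‖y‖)) • y + √η • ξ

theorem norm_emStep_le {η : ℝ} (hη : 0 < η) (hη36 : η ≤ 1 / 36) {y ξ : E}
    (hy : ‖y‖ ≤ (√η)⁻¹ * log η ^ 2) (hξ : ‖ξ‖ ≤ log η ^ 2) :
    ‖emStep η y ξ‖ ≤ (√η)⁻¹ * log η ^ 2 := by
  have hL2 : 2 ≤ -log η := two_le_neg_log hη hη36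
  have hs : 0 < √η := sqrt_pos.2 hη
  have hs6 : √η ≤ 1 / 6 := sqrt_le_iff.2 ⟨by norm_num, by linarith⟩
  have hηs : η * (√η)⁻¹ = √η := by rw [← div_eq_mul_inv, div_sqrt]
  set c := η * log (1 + ‖y‖)
  have hc : c ≤ 1 :=
    (mul_log_one_add_le_one hη hη36).trans' <|
      mul_le_mul_of_nonneg_left (log_le_log (by positivity) (by linarith)) hη.le
  have hnoise : ‖√η • ξ‖ ≤ √η * log η ^ 2 := by
    rw [norm_smul, norm_of_nonneg hs.le]; gcongr
  refine (norm_sub_smul_add_le hc y _).trans ?_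
  rcases le_or_gt ‖y‖ (√η)⁻¹ with hsmall | hlarge
  · have hc0 : 0 ≤ c := mul_nonneg hη.le (log_nonneg (by simp))
    have h6 : 6 ≤ (√η)⁻¹ := by rw [le_inv_comm₀ (by norm_num) hs]; linarith
    calc (1 - c) * ‖y‖ + ‖√η • ξ‖ ≤ (√η)⁻¹ + √η * log η ^ 2 := by nlinarith
      _ ≤ (√η)⁻¹ * log η ^ 2 := by
        have hL4 : 4 ≤ log η ^ 2 := by nlinarith
        nlinarith [mul_le_mul_of_nonneg_right hs6 (sq_nonneg (log η)),
          mul_nonneg (sub_nonneg.2 h6) (sub_nonneg.2 hL4)]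
  · have hcL : η * (-log η / 2) ≤ c := by
      rw [← log_inv_sqrt hη.le]
      exact mul_le_mul_of_nonneg_left (log_le_log (by positivity) (by linarith)) hη.le
    calc (1 - c) * ‖y‖ + ‖√η • ξ‖
        ≤ (1 - η * (-log η / 2)) * ((√η)⁻¹ * log η ^ 2) + √η * log η ^ 2 := by
          gcongr
          linarith
      _ = (√η)⁻¹ * log η ^ 2 - √η * log η ^ 2 * (-log η / 2 - 1) := by
          linear_combination (log η ^ 3 / 2) * hηs
      _ ≤ (√η)⁻¹ * log η ^ 2 := by
          have : 0 ≤ -log η / 2 - 1 := by linarith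
          nlinarith [mul_nonneg (mul_nonneg hs.le (sq_nonneg (log η))) this]

end

theorem em_bound_small_noise_general
    (d : ℕ) (n : ℕ) (η : ℝ) (hη : 0 < η) (hη' : η ≤ Real.exp (-5))
    (x₀ : EuclideanSpace ℝ (Fin d)) (hx₀ : ‖x₀‖ ≤ η ^ (-(1 : ℝ) / 2))
    (N : ℕ → EuclideanSpace ℝ (Fin d))
    (hN : ∀ m, 1 ≤ m → m ≤ n → ‖N m‖ < |Real.log η| ^ 2)
    (Y : ℕ → EuclideanSpace ℝ (Fin d)) (hY0 : Y 0 = x₀)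
    (hYrec : ∀ m, Y (m + 1) = Y m - (η * Real.log (1 + ‖Y m‖)) • Y m + Real.sqrt η • N (m + 1)) :
    ∀ m, m ≤ n → ‖Y m‖ ≤ η ^ (-(1 : ℝ) / 2) * |Real.log η| ^ 2 := by
  have hη36 : η ≤ 1 / 36 := hη'.trans exp_neg_five_le
  have hpow : η ^ (-(1 : ℝ) / 2) = (√η)⁻¹ := by
    rw [neg_div, rpow_neg hη.le, ← sqrt_eq_rpow]
  rw [hpow] at hx₀ ⊢
  simp only [sq_abs] at hN ⊢
  intro m hm
  induction m with
  | zero =>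
    have : 1 ≤ log η ^ 2 := by nlinarith [two_le_neg_log hη hη36]
    exact hY0 ▸ hx₀.trans (le_mul_of_one_le_right (by positivity) this)
  | succ k ih => exact hYrec k ▸ norm_emStep_le hη hη36 (ih (by omega)) (hN _ (by omega) hm).le

/-- Deterministic bound for the Euler–Maruyama recursion
`Y_{m+1} = Y_m − η Y_m log(1+|Y_m|) + √η N_{m+1}` with `η ∈ (0, e^{−5}]`,
`|x_0| ≤ η^{−1/2}` and Gaussian increments bounded by `|log η|²`:
`sup_{0 ≤ m ≤ n} |Y_m| ≤ η^{−1/2} |log η|²`. -/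
theorem em_bound_small_noise
    (d : ℕ) (hd : 1 ≤ d) (n : ℕ) (η : ℝ) (hη : 0 < η) (hη' : η ≤ Real.exp (-5))
    (x₀ : EuclideanSpace ℝ (Fin d)) (hx₀ : ‖x₀‖ ≤ η ^ (-(1 : ℝ) / 2))
    (N : ℕ → EuclideanSpace ℝ (Fin d))
    (hN : ∀ m, 1 ≤ m → m ≤ n → ‖N m‖ < |Real.log η| ^ 2)
    (Y : ℕ → EuclideanSpace ℝ (Fin d)) (hY0 : Y 0 = x₀)
    (hYrec : ∀ m, Y (m + 1) = Y m - (η * Real.log (1 + ‖Y m‖)) • Y m + Real.sqrt η • N (m + 1)) :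
    ∀ m, m ≤ n → ‖Y m‖ ≤ η ^ (-(1 : ℝ) / 2) * |Real.log η| ^ 2 :=
  em_bound_small_noise_general d n η hη hη' x₀ hx₀ N hN Y hY0 hYrec
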